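/- arXiv:1611.07267 — 3 statements merged into one kernel-verified Lean document; each statement's English description precedes it below -/
import Mathlib

section
/- Let X be an almost discretely Lindelöf first-countable Hausdorff space and let A ⊆ X be a θ-closed set. Then A is the intersection of at most 2^ℵ₀ many open subsets of X. -/
open Cardinal Set Topology

universe u

/-- A subset `D` is discrete (as a subspace): every point of `D` has an open
neighbourhood meeting `D` only in that point. -/
def IsDiscreteSubset {X : Type u} [TopologicalSpace X] (D : Set X) : Prop :=
  ∀ x ∈ D, ∃ U : Set X, IsOpen U ∧ U ∩ D = {x}

/-- `X` is almost discretely Lindelöf: every discrete subset is contained in a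
Lindelöf subspace. -/
def AlmostDiscretelyLindelof (X : Type u) [TopologicalSpace X] : Prop :=
  ∀ D : Set X, IsDiscreteSubset D → ∃ L : Set X, IsLindelof L ∧ D ⊆ L

/-- The character of `X` is at most `κ`: every point has an open neighbourhood
base of cardinality at most `κ`. -/
def HasCharacterLE (X : Type u) [TopologicalSpace X] (κ : Cardinal.{u}) : Prop :=
  ∀ x : X, ∃ B : Set (Set X), #B ≤ κ ∧ (∀ U ∈ B, IsOpen U ∧ x ∈ U) ∧
    ∀ V ∈ nhds x, ∃ U ∈ B, U ⊆ V

/-- `R` is right-separated: it carries a well-order in which each point has a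
neighbourhood avoiding all strictly later points (initial segments are open). -/
def RightSeparated {X : Type u} [TopologicalSpace X] (R : Set X) : Prop :=
  ∃ r : R → R → Prop, IsWellOrder R r ∧
    ∀ a : R, ∃ U : Set X, IsOpen U ∧ (a : X) ∈ U ∧ ∀ b : R, (b : X) ∈ U → ¬ r a b

/-- `R` is left-separated: it carries a well-order in which each point has a
neighbourhood avoiding all strictly earlier points (initial segments are closed). -/
def LeftSeparated {X : Type u} [TopologicalSpace X] (R : Set X) : Prop :=
  ∃ r : R → R → Prop, IsWellOrder R r ∧
    ∀ a : R, ∃ U : Set X, IsOpen U ∧ (a : X) ∈ U ∧ ∀ b : R, (b : X) ∈ U → ¬ r b a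

/-- The θ-closure operator: `x ∈ thetaCl A` iff the closure of every open
neighbourhood of `x` meets `A`. -/
def thetaCl {X : Type u} [TopologicalSpace X] (A : Set X) : Set X :=
  {x | ∀ U : Set X, IsOpen U → x ∈ U → (closure U ∩ A).Nonempty}

/-- `A` is θ-closed if it coincides with its θ-closure operator value. -/
def IsThetaClosed {X : Type u} [TopologicalSpace X] (A : Set X) : Prop :=
  thetaCl A = A

/-- `[A]_θ`, the smallest θ-closed set containing `A`. -/
def thetaClosure {X : Type u} [TopologicalSpace X] (A : Set X) : Set X :=
  ⋂₀ {B : Set X | A ⊆ B ∧ IsThetaClosed B}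

/-- A (well-ordered) sequence is free if at every cut the closures of the two
pieces are disjoint. -/
def IsFreeSeq {X : Type u} [TopologicalSpace X] {ι : Type u} [LinearOrder ι]
    (f : ι → X) : Prop :=
  ∀ i : ι, closure (f '' {j | j < i}) ∩ closure (f '' {j | i ≤ j}) = ∅

/-- A (well-ordered) sequence is θ-free if at every cut the θ-closure of the
initial piece is disjoint from the closure of the final piece. -/
def IsThetaFreeSeq {X : Type u} [TopologicalSpace X] {ι : Type u} [LinearOrder ι]
    (f : ι → X) : Prop :=
  ∀ i : ι, thetaClosure (f '' {j | j < i}) ∩ closure (f '' {j | i ≤ j}) = ∅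

/-- A cellular family: pairwise disjoint nonempty open sets. -/
def IsCellularFamily {X : Type u} [TopologicalSpace X] (𝒰 : Set (Set X)) : Prop :=
  (∀ U ∈ 𝒰, IsOpen U ∧ U.Nonempty) ∧ 𝒰.PairwiseDisjoint id

/-- `X` is cellular-Lindelöf: every cellular family admits a Lindelöf subspace
meeting each of its members. -/
def CellularLindelof (X : Type u) [TopologicalSpace X] : Prop :=
  ∀ 𝒰 : Set (Set X), IsCellularFamily 𝒰 →
    ∃ L : Set X, IsLindelof L ∧ ∀ U ∈ 𝒰, (U ∩ L).Nonempty

/-- `lam` is a caliber of `X`: any `lam`-many nonempty open sets include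
`lam`-many with a common point. -/
def IsCaliber (X : Type u) [TopologicalSpace X] (lam : Cardinal.{u}) : Prop :=
  ∀ (ι : Type u) (U : ι → Set X), #ι = lam →
    (∀ i, IsOpen (U i) ∧ (U i).Nonempty) →
    ∃ S : Set ι, #S = lam ∧ (⋂ i ∈ S, U i).Nonempty

/-!
For `x ∉ A`, θ-closedness gives an open `U ∋ x` whose closure misses `A`. These sets cover `Aᶜ`,
and `A` is the intersection of the complements of the closures of the members of any subcover, so
it suffices that `hL(X) ≤ 𝔠`. If an open cover of a subspace had no subcover of size `≤ 𝔠`,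
transfinite recursion would give a sequence of length `𝔠⁺` that is both left- and right-separated,
hence discrete. It would then lie in a Lindelöf subspace, but by Arhangel'skiĭ's theorem Lindelöf
subspaces of a first-countable Hausdorff space have size `≤ 𝔠`.
-/

theorem Cardinal.mk_nat_arrow_le_continuum {α : Type u} (h : #α ≤ 𝔠) : #(ℕ → α) ≤ 𝔠 := by
  calc #(ℕ → α) = #α ^ ℵ₀ := by simp
    _ ≤ 𝔠 ^ ℵ₀ := power_le_power_right h
    _ = 𝔠 := continuum_power_aleph0

theorem Cardinal.mk_iUnion_le_continuum {α ι : Type u} {f : ι → Set α} (hι : #ι ≤ 𝔠)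
    (hf : ∀ i, #(f i) ≤ 𝔠) : #(⋃ i, f i) ≤ 𝔠 :=
  calc #(⋃ i, f i) ≤ #ι * ⨆ i, #(f i) := mk_iUnion_le f
    _ ≤ 𝔠 * 𝔠 := mul_le_mul' hι (ciSup_le' hf)
    _ = 𝔠 := continuum_mul_self

open Ordinal in
theorem Ordinal.exists_forall_lt_of_omega_one (s : ℕ → (ω₁ : Ordinal.{u}).ToType) :
    ∃ η, ∀ n, s n < η := by
  have hcof : ¬ IsCofinal (range s) := fun h => by
    have := (Order.cof_le h).trans (countable_range s).le_aleph0
    rw [cof_toType, cof_omega_one] at this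
    exact this.not_gt aleph0_lt_aleph_one
  simpa [IsCofinal] using hcof

section FirstCountableT2

variable {Y : Type u} [TopologicalSpace Y] [FirstCountableTopology Y] [T2Space Y]

theorem mk_closure_le_continuum {S : Set Y} (hS : #S ≤ 𝔠) : #(closure S) ≤ 𝔠 := by
  have hseq : ∀ x : closure S, ∃ u : ℕ → S, Filter.Tendsto (fun n => (u n : Y)) .atTop (𝓝 x) :=
    fun x => by
      obtain ⟨u, huS, hu⟩ := mem_closure_iff_seq_limit.mp x.2
      exact ⟨fun n => ⟨u n, huS n⟩, hu⟩
  choose u hu using hseq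
  have hinj : Function.Injective u := fun x y hxy =>
    Subtype.ext (tendsto_nhds_unique (hu x) (hxy ▸ hu y))
  exact (mk_le_of_injective hinj).trans (mk_nat_arrow_le_continuum hS)

open Ordinal in
/-- Closing-off along `ω₁`: the union of the stages is closed under sequential limits and under
`Φ` because, as `cof ω₁ > ℵ₀`, every sequence in it lies in a single earlier stage. -/
theorem exists_isClosed_superset_forall_seq (Φ : (ℕ → Y) → Set Y) (hΦ : ∀ f, #(Φ f) ≤ 𝔠)
    {S : Set Y} (hS : #S ≤ 𝔠) :
    ∃ T, S ⊆ T ∧ IsClosed T ∧ #T ≤ 𝔠 ∧ ∀ f : ℕ → Y, (∀ n, f n ∈ T) → Φ f ⊆ T := by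
  let step : Set Y → Set Y := fun U => closure (S ∪ U ∪ ⋃ f : ℕ → U, Φ ((↑) ∘ f))
  have mk_step : ∀ U : Set Y, #U ≤ 𝔠 → #(step U) ≤ 𝔠 := fun U hU =>
    mk_closure_le_continuum <| (mk_union_le _ _).trans <| add_le_of_le aleph0_le_continuum
      ((mk_union_le _ _).trans (add_le_of_le aleph0_le_continuum hS hU))
      (mk_iUnion_le_continuum (mk_nat_arrow_le_continuum hU) fun f => hΦ _)
  have hI : #(ω₁ : Ordinal.{u}).ToType ≤ 𝔠 := by simpa using aleph_one_le_continuum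
  let H : (ω₁ : Ordinal.{u}).ToType → Set Y :=
    wellFounded_lt.fix fun η H => step (⋃ ζ : Iio η, H ζ ζ.2)
  have hH : ∀ η, H η = step (⋃ ζ : Iio η, H ζ.1) :=
    wellFounded_lt.fix_eq _
  have mk_H : ∀ η, #(H η) ≤ 𝔠 := fun η => by
    induction η using WellFoundedLT.induction with
    | _ η ih =>
      rw [hH]
      exact mk_step _ (mk_iUnion_le_continuum ((mk_set_le _).trans hI) fun ζ : Iio η => ih ζ ζ.2)
  have hbound : ∀ f : ℕ → Y, (∀ n, f n ∈ ⋃ η, H η) → ∃ η, ∀ n, f n ∈ ⋃ ζ : Iio η, H ζ.1 := by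
    intro f hf
    choose s hs using fun n => mem_iUnion.1 (hf n)
    obtain ⟨η, hη⟩ := exists_forall_lt_of_omega_one s
    exact ⟨η, fun n => mem_iUnion.2 ⟨⟨s n, hη n⟩, hs n⟩⟩
  obtain ⟨η₀⟩ : Nonempty (ω₁ : Ordinal.{u}).ToType := nonempty_toType_iff.2 (omega_pos 1).ne'
  refine ⟨⋃ η, H η, ?_, ?_, mk_iUnion_le_continuum hI mk_H, ?_⟩
  · refine subset_iUnion_of_subset η₀ ?_
    rw [hH]
    exact subset_closure.trans' (subset_union_left.trans subset_union_left)
  · refine isClosed_of_closure_subset fun x hx => ?_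
    obtain ⟨f, hf, hfx⟩ := mem_closure_iff_seq_limit.1 hx
    obtain ⟨η, hη⟩ := hbound f hf
    refine mem_iUnion.2 ⟨η, ?_⟩
    rw [hH]
    exact closure_mono (subset_union_right.trans subset_union_left)
      (mem_closure_of_tendsto hfx (.of_forall hη))
  · intro f hf
    obtain ⟨η, hη⟩ := hbound f hf
    refine subset_iUnion_of_subset η ?_
    rw [hH]
    exact subset_closure.trans' <| subset_union_right.trans' <|
      subset_iUnion_of_subset (fun n => ⟨f n, hη n⟩) subset_rfl

/-- Arhangel'skiĭ's bound `|Y| ≤ 2^(L(Y) χ(Y))`, for first-countable `Y`. -/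
theorem LindelofSpace.mk_le_continuum [LindelofSpace Y] : #Y ≤ 𝔠 := by
  rcases isEmpty_or_nonempty Y with hY | hY
  · simp
  obtain ⟨y₀⟩ := id hY
  have hbasis : ∀ x : Y, ∃ B : ℕ → Set Y, (∀ n, IsOpen (B n) ∧ x ∈ B n) ∧
      ∀ V ∈ 𝓝 x, ∃ n, B n ⊆ V := fun x => by
    obtain ⟨B, hB, hBx⟩ := (nhds_basis_opens x).exists_antitone_subbasis
    exact ⟨B, fun n => (hB n).symm, fun V hV => by simpa using hBx.mem_iff.1 hV⟩
  choose B hB hBx using hbasis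
  -- `esc f k` escapes the countable cover `⋃ n, B (f n) (k n)` whenever it is not all of `Y`.
  let esc : (ℕ → Y) → (ℕ → ℕ) → Y := fun f k => Classical.epsilon fun z => z ∉ ⋃ n, B (f n) (k n)
  obtain ⟨T, hy₀T, hT, hT_card, hT_esc⟩ := exists_isClosed_superset_forall_seq
    (fun f => range (esc f)) (fun f => by simpa using mk_range_le_lift (f := esc f))
    (S := {y₀}) (by simpa using one_le_aleph0.trans aleph0_le_continuum)
  suffices hT_univ : T = Set.univ by
    rwa [← mk_univ, ← hT_univ]
  refine eq_univ_of_forall fun z => by_contra fun hz => ?_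
  have hk : ∀ x : T, ∃ n, z ∉ B x n := fun x => by
    obtain ⟨n, hn⟩ := hBx x {z}ᶜ (compl_singleton_mem_nhds fun h => hz (h ▸ x.2))
    exact ⟨n, fun hzB => hn hzB rfl⟩
  choose k hk using hk
  have : Nonempty T := ⟨⟨y₀, hy₀T rfl⟩⟩
  obtain ⟨e, he⟩ := hT.isLindelof.indexed_countable_subcover (fun x : T => B x (k x))
    (fun x => (hB _ _).1) fun x hx => mem_iUnion.2 ⟨⟨x, hx⟩, (hB _ _).2⟩
  have hesc : esc ((↑) ∘ e) (k ∘ e) ∈ T := hT_esc _ (fun n => (e n).2) ⟨k ∘ e, rfl⟩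
  exact Classical.epsilon_spec (p := fun z => z ∉ ⋃ n, B (e n) (k (e n)))
    ⟨z, by simpa using fun n => hk (e n)⟩ (he hesc)

end FirstCountableT2

theorem IsLindelof.mk_le_continuum {X : Type u} [TopologicalSpace X] [FirstCountableTopology X]
    [T2Space X] {L : Set X} (hL : IsLindelof L) : #L ≤ 𝔠 :=
  have := isLindelof_iff_lindelofSpace.mp hL
  LindelofSpace.mk_le_continuum

theorem exists_seq_forall_image_Iio {α ι : Type u} [LinearOrder ι] [WellFoundedLT ι]
    {κ : Cardinal.{u}} (hι : ∀ i : ι, #(Iio i) ≤ κ) (S : Set α) (P : Set α → α → Prop)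
    (h : ∀ F ⊆ S, #F ≤ κ → ∃ x ∈ S, P F x) :
    ∃ g : ι → α, ∀ i, g i ∈ S ∧ P (g '' Iio i) (g i) := by
  obtain ⟨x₀, -⟩ := h ∅ (empty_subset S) (by simp)
  have : Nonempty α := ⟨x₀⟩
  let g : ι → α := wellFounded_lt.fix fun i g =>
    Classical.epsilon fun x => x ∈ S ∧ P (range fun j : Iio i => g j j.2) x
  have hg : ∀ i, g i = Classical.epsilon fun x => x ∈ S ∧ P (g '' Iio i) x := fun i => by
    rw [image_eq_range]
    exact wellFounded_lt.fix_eq _ i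
  refine ⟨g, fun i => ?_⟩
  induction i using WellFoundedLT.induction with
  | _ i ih =>
    rw [hg i]
    refine Classical.epsilon_spec (h _ ?_ (mk_image_le.trans (hι i)))
    rintro _ ⟨j, hj, rfl⟩
    exact (ih j hj).1

section

variable {X : Type u} [TopologicalSpace X]

theorem isDiscreteSubset_range {ι : Type*} [LinearOrder ι] {g : ι → X} {V : ι → Set X}
    (hV : ∀ i, IsOpen (V i)) (hgV : ∀ i, g i ∈ V i) (hright : ∀ i j, i < j → g j ∉ V i)
    (hleft : ∀ i, g i ∉ closure (g '' Iio i)) : IsDiscreteSubset (range g) := by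
  rintro _ ⟨i, rfl⟩
  refine ⟨V i ∩ (closure (g '' Iio i))ᶜ, (hV i).inter isClosed_closure.isOpen_compl, ?_⟩
  refine eq_singleton_iff_unique_mem.2 ⟨⟨⟨hgV i, hleft i⟩, i, rfl⟩, ?_⟩
  rintro _ ⟨⟨hjV, hj⟩, j, rfl⟩
  rcases lt_trichotomy j i with hji | rfl | hij
  · exact absurd (subset_closure (mem_image_of_mem g (mem_Iio.2 hji))) hj
  · rfl
  · exact absurd hjV (hright i j hij)

theorem IsThetaClosed.exists_isOpen_disjoint_closure {A : Set X} (hA : IsThetaClosed A) {x : X}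
    (hx : x ∉ A) : ∃ U, IsOpen U ∧ x ∈ U ∧ Disjoint (closure U) A := by
  rw [← hA] at hx
  simpa [thetaCl, not_nonempty_iff_eq_empty, disjoint_iff_inter_eq_empty] using hx

end

/-- `hL(X) ≤ 𝔠`. -/
theorem AlmostDiscretelyLindelof.exists_subcover {X : Type u} [TopologicalSpace X]
    [FirstCountableTopology X] [T2Space X] (hX : AlmostDiscretelyLindelof X) {S : Set X}
    {𝒰 : Set (Set X)} (h𝒰 : ∀ U ∈ 𝒰, IsOpen U) (hS : S ⊆ ⋃₀ 𝒰) :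
    ∃ 𝒱 ⊆ 𝒰, #𝒱 ≤ 𝔠 ∧ S ⊆ ⋃₀ 𝒱 := by
  by_contra hne
  simp only [not_exists, not_and] at hne
  have hV : ∀ x ∈ S, ∃ U ∈ 𝒰, x ∈ U := fun x hx => mem_sUnion.1 (hS hx)
  choose! V hV𝒰 hxV using hV
  have hescape : ∀ F ⊆ S, #F ≤ 𝔠 → ∃ x ∈ S, x ∉ closure F ∧ ∀ t ∈ F, x ∉ V t := by
    intro F hFS hF
    obtain ⟨x, hxS, hx⟩ := not_subset.1 <| hne (V '' (closure F ∩ S))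
      (image_subset_iff.2 fun y hy => hV𝒰 y hy.2)
      (mk_image_le.trans ((mk_le_mk_of_subset inter_subset_left).trans
        (mk_closure_le_continuum hF)))
    exact ⟨x, hxS, fun hxF => hx ⟨V x, ⟨x, ⟨hxF, hxS⟩, rfl⟩, hxV x hxS⟩,
      fun t ht hxt => hx ⟨V t, ⟨t, ⟨subset_closure ht, hFS ht⟩, rfl⟩, hxt⟩⟩
  have hI : ∀ i : (Order.succ 𝔠 : Cardinal.{u}).ord.ToType, #(Iio i) ≤ 𝔠 := fun i =>
    Order.lt_succ_iff.1 (by simpa using mk_Iio_lt i)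
  obtain ⟨g, hg⟩ := exists_seq_forall_image_Iio hI S _ hescape
  have hinj : Function.Injective g := fun i j hij => by
    by_contra hne
    rcases lt_or_gt_of_ne hne with h | h
    · exact (hg j).2.1 (subset_closure ⟨i, h, hij⟩)
    · exact (hg i).2.1 (subset_closure ⟨j, h, hij.symm⟩)
  obtain ⟨L, hL, hgL⟩ := hX _ <| isDiscreteSubset_range (fun i => (h𝒰 _ (hV𝒰 _ (hg i).1)))
    (fun i => hxV _ (hg i).1) (fun i j hij => (hg j).2.2 _ (mem_image_of_mem g hij))
    (fun i => (hg i).2.1)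
  have : Order.succ 𝔠 ≤ 𝔠 :=
    calc Order.succ 𝔠 = #(range g) := by rw [mk_range_eq g hinj, mk_ord_toType]
      _ ≤ #L := mk_le_mk_of_subset hgL
      _ ≤ 𝔠 := hL.mk_le_continuum
  exact this.not_gt (Order.lt_succ 𝔠)

/-- in an almost discretely Lindelöf first-countable Hausdorff space,
every θ-closed set is the intersection of at most `𝔠` many open sets. -/
theorem stmt1 {X : Type u} [TopologicalSpace X] [T2Space X]
    [FirstCountableTopology X] (hADL : AlmostDiscretelyLindelof X)
    (A : Set X) (hA : IsThetaClosed A) :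
    ∃ 𝒰 : Set (Set X), #𝒰 ≤ Cardinal.continuum ∧ (∀ U ∈ 𝒰, IsOpen U) ∧
      A = ⋂₀ 𝒰 := by
  obtain ⟨𝒱, h𝒱, h𝒱_card, hA𝒱⟩ := hADL.exists_subcover
    (𝒰 := {U | IsOpen U ∧ Disjoint (closure U) A}) (fun U hU => hU.1) (S := Aᶜ) fun x hx => by
      obtain ⟨U, hU, hxU, hUA⟩ := hA.exists_isOpen_disjoint_closure hx
      exact ⟨U, ⟨hU, hUA⟩, hxU⟩
  refine ⟨(fun U => (closure U)ᶜ) '' 𝒱, mk_image_le.trans h𝒱_card, ?_, ?_⟩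
  · rintro _ ⟨U, -, rfl⟩
    exact isClosed_closure.isOpen_compl
  · ext x
    refine ⟨fun hx => ?_, fun hx => by_contra fun hxA => ?_⟩
    · rintro _ ⟨U, hU, rfl⟩
      exact (h𝒱 hU).2.notMem_of_mem_right hx
    · obtain ⟨U, hU, hxU⟩ := hA𝒱 hxA
      exact hx _ ⟨U, hU, rfl⟩ (subset_closure hxU)
end

section
/- Every Hausdorff cellular-Lindelöf first-countable space has cardinality at most 2^𝔠. -/
open Cardinal Set Topology

universe u

/-!
A Lindelöf subspace of a first-countable Hausdorff space has at most `𝔠` points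
(Arhangel'skiĭ), and a cellular family injects into any set meeting all of its members, so every
cellular family of `X` has at most `𝔠` members; the Hajnal–Juhász inequality
`|X| ≤ 2 ^ (χ(X) c(X))` then gives `|X| ≤ 2 ^ 𝔠`.

Both inequalities are closing-off arguments over a fixed countable open neighbourhood base at
each point. The union of a chain of regular length `θ` (`ℵ₁`, resp. `c(X)⁺`) is a set `A` of
the target size that contains, for every small family of basic sets centred in `A`, a point
outside its union (resp. outside the union of the closures of countably many subfamilies of
size `≤ c(X)`). A point `q ∉ A` produces such a family covering `A` but missing `q`: a countable
subcover of the closed, hence Lindelöf, set `A`; resp., for each `n`, the basic sets around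
points of `A` disjoint from the `n`-th basic neighbourhood of `q`, thinned out to `c(X)` members
with the same closure of the union by a maximal cellular refinement.
-/

section ClosingOff

variable {X : Type u}

noncomputable def closingChain (θ : Cardinal.{u}) (step : Set X → Set X) :
    θ.ord.ToType → Set X
  | i => step (⋃ j : Iio i, closingChain θ step j)
termination_by i => i
decreasing_by exact j.2

theorem closingChain_eq (θ : Cardinal.{u}) (step : Set X → Set X) (i : θ.ord.ToType) :
    closingChain θ step i = step (⋃ j : Iio i, closingChain θ step j) := by
  rw [closingChain]

theorem mk_closingChain_le {θ κ : Cardinal.{u}} (hκ : ℵ₀ ≤ κ) (hθκ : θ ≤ κ)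
    {step : Set X → Set X} (hstep : ∀ S : Set X, #S ≤ κ → #(step S) ≤ κ) (i : θ.ord.ToType) :
    #(closingChain θ step i) ≤ κ := by
  induction i using WellFoundedLT.induction with
  | ind i ih =>
    rw [closingChain_eq]
    apply hstep
    calc #(⋃ j : Iio i, closingChain θ step j)
        ≤ #(Iio i) * ⨆ j : Iio i, #(closingChain θ step j) := mk_iUnion_le _
      _ ≤ κ * κ := by
        gcongr
        · exact mk_set_le _ |>.trans (by rw [mk_toType, card_ord]; exact hθκ)
        · exact ciSup_le' fun j => ih j j.2
      _ = κ := mul_eq_self hκ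

theorem exists_mk_le_and_closed_under {θ κ : Cardinal.{u}} (hθ : θ.IsRegular) (hθκ : θ ≤ κ)
    {step : Set X → Set X} (hmono : Monotone step) (hstep : ∀ S : Set X, #S ≤ κ → #(step S) ≤ κ) :
    ∃ A : Set X, #A ≤ κ ∧ ∀ R ⊆ A, #R < θ → step R ⊆ A := by
  have hκ : ℵ₀ ≤ κ := hθ.aleph0_le.trans hθκ
  set F := closingChain θ step
  refine ⟨⋃ i, F i, ?_, fun R hRA hRθ => ?_⟩
  · calc #(⋃ i, F i) ≤ #θ.ord.ToType * ⨆ i, #(F i) := mk_iUnion_le _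
      _ ≤ κ * κ := by
        gcongr
        · rw [mk_toType, card_ord]; exact hθκ
        · exact ciSup_le' (mk_closingChain_le hκ hθκ hstep)
      _ = κ := mul_eq_self hκ
  choose stage hstage using fun r : R => mem_iUnion.1 (hRA r.2)
  obtain ⟨i, hi⟩ : ∃ i, ∀ j ∈ range stage, j < i := by
    refine not_isCofinal_iff.1 fun hcof => ?_
    have := (Order.cof_le hcof).trans mk_range_le
    rw [Ordinal.cof_toType, hθ.cof_ord] at this
    exact this.not_gt hRθ
  have hR : R ⊆ ⋃ j : Iio i, F j := fun r hr =>
    mem_iUnion.2 ⟨⟨stage ⟨r, hr⟩, hi _ (mem_range_self _)⟩, hstage ⟨r, hr⟩⟩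
  exact (hmono hR).trans ((closingChain_eq θ step i).symm ▸ subset_iUnion F i)

end ClosingOff

section BasicSets

variable {X : Type u}

def basicSets (b : X → ℕ → Set X) (S : Set X) : Set (Set X) :=
  ⋃ x ∈ S, range (b x)

def basicFamilies (b : X → ℕ → Set X) (μ : Cardinal.{u}) (S : Set X) : Set (Set (Set X)) :=
  {𝒞 | 𝒞 ⊆ basicSets b S ∧ #𝒞 ≤ μ}

variable {b : X → ℕ → Set X}

theorem basicFamilies_mono (μ : Cardinal.{u}) : Monotone (basicFamilies b μ) :=
  fun _ _ hST _ h𝒞 => ⟨h𝒞.1.trans (biUnion_subset_biUnion_left hST), h𝒞.2⟩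

theorem image_mem_basicFamilies {μ : Cardinal.{u}} (m : X → ℕ) {R : Set X} (hR : #R ≤ μ) :
    (fun x => b x (m x)) '' R ∈ basicFamilies b μ R :=
  ⟨image_subset_iff.2 fun _ hx => mem_biUnion hx (mem_range_self _), mk_image_le.trans hR⟩

theorem mk_basicFamilies_le {μ ν : Cardinal.{u}} (hν : ℵ₀ ≤ ν) {S : Set X} (hS : #S ≤ ν) :
    #(basicFamilies b μ S) ≤ ν ^ μ := by
  have hbasic : #(basicSets b S) ≤ ν :=
    calc #(basicSets b S) ≤ #S * ⨆ x : S, #(range (b x)) := mk_biUnion_le _ _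
      _ ≤ ν * ν := by
        gcongr
        exact ciSup_le' fun _ => (countable_range _).le_aleph0.trans hν
      _ = ν := mul_eq_self hν
  exact (mk_bounded_subset_le _ μ).trans (power_le_power_right (max_le hbasic hν))

end BasicSets

section PointsOutside

variable {X : Type u} [Nonempty X]

noncomputable def pointsOutside (𝓕 : Set (Set X)) : Set X :=
  (fun F => Classical.epsilon (· ∉ F)) '' 𝓕

theorem pointsOutside_mono : Monotone (pointsOutside (X := X)) :=
  fun _ _ h => image_mono h

theorem mk_pointsOutside_le (𝓕 : Set (Set X)) : #(pointsOutside 𝓕) ≤ #𝓕 :=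
  mk_image_le

theorem exists_mem_pointsOutside {𝓕 : Set (Set X)} {F : Set X} (hF : F ∈ 𝓕) {q : X}
    (hq : q ∉ F) : ∃ y ∈ pointsOutside 𝓕, y ∉ F :=
  ⟨_, mem_image_of_mem _ hF, Classical.epsilon_spec (p := (· ∉ F)) ⟨q, hq⟩⟩

end PointsOutside

section Topology

variable {X : Type u} [TopologicalSpace X]

def IsOpenNhdsBasis (b : X → ℕ → Set X) : Prop :=
  ∀ x, (𝓝 x).HasBasis (fun _ => True) (b x) ∧ ∀ n, IsOpen (b x n)

namespace IsOpenNhdsBasis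

variable {b : X → ℕ → Set X}

theorem isOpen (hb : IsOpenNhdsBasis b) (x : X) (n : ℕ) : IsOpen (b x n) := (hb x).2 n

theorem mem (hb : IsOpenNhdsBasis b) (x : X) (n : ℕ) : x ∈ b x n :=
  mem_of_mem_nhds ((hb x).1.mem_of_mem trivial)

theorem exists_subset (hb : IsOpenNhdsBasis b) {x : X} {V : Set X} (hV : V ∈ 𝓝 x) :
    ∃ n, b x n ⊆ V :=
  let ⟨n, _, hn⟩ := (hb x).1.mem_iff.1 hV
  ⟨n, hn⟩

theorem exists_notMem (hb : IsOpenNhdsBasis b) [T1Space X] {x q : X} (hxq : x ≠ q) :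
    ∃ m, q ∉ b x m :=
  let ⟨m, hm⟩ := hb.exists_subset (isOpen_compl_singleton.mem_nhds hxq)
  ⟨m, fun hq => hm hq rfl⟩

theorem exists_disjoint (hb : IsOpenNhdsBasis b) [T2Space X] {x q : X} (hxq : x ≠ q) :
    ∃ n m, Disjoint (b x m) (b q n) := by
  obtain ⟨P, Q, hP, hQ, hxP, hqQ, hPQ⟩ := t2_separation hxq
  obtain ⟨m, hm⟩ := hb.exists_subset (hP.mem_nhds hxP)
  obtain ⟨n, hn⟩ := hb.exists_subset (hQ.mem_nhds hqQ)
  exact ⟨n, m, hPQ.mono hm hn⟩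

end IsOpenNhdsBasis

theorem exists_isOpenNhdsBasis [FirstCountableTopology X] :
    ∃ b : X → ℕ → Set X, IsOpenNhdsBasis b := by
  choose b hb hbasis using fun x : X => (nhds_basis_opens x).exists_antitone_subbasis
  exact ⟨b, fun x => ⟨(hbasis x).toHasBasis, fun n => (hb x n).2⟩⟩

theorem mk_closure_le_pow_aleph0 [T2Space X] [FrechetUrysohnSpace X] (S : Set X) :
    #(closure S) ≤ #S ^ ℵ₀ := by
  choose u hu hlim using fun y : closure S => mem_closure_iff_seq_limit.1 y.2
  have hinj : Function.Injective fun y : closure S => fun n => (⟨u y n, hu y n⟩ : S) := by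
    intro y z hyz
    have huyz : u y = u z := funext fun n => congrArg Subtype.val (congrFun hyz n)
    exact Subtype.ext (tendsto_nhds_unique (hlim y) (huyz ▸ hlim z))
  simpa using mk_le_of_injective hinj

theorem isClosed_of_closure_subset_of_countable [FrechetUrysohnSpace X] {A : Set X}
    (hA : ∀ R ⊆ A, R.Countable → closure R ⊆ A) : IsClosed A := by
  refine isClosed_of_closure_subset fun y hy => ?_
  obtain ⟨u, hu, hlim⟩ := mem_closure_iff_seq_limit.1 hy
  exact hA (range u) (range_subset_iff.2 hu) (countable_range u)
    (mem_closure_of_tendsto hlim (Filter.Eventually.of_forall fun n => mem_range_self n))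

end Topology

section Arhangelskii

variable {X : Type u} [TopologicalSpace X] [Nonempty X]

noncomputable def arhangelskiiStep (b : X → ℕ → Set X) (S : Set X) : Set X :=
  closure S ∪ pointsOutside (sUnion '' basicFamilies b ℵ₀ S)

theorem arhangelskiiStep_mono (b : X → ℕ → Set X) : Monotone (arhangelskiiStep b) :=
  fun _ _ h => union_subset_union (closure_mono h)
    (pointsOutside_mono (image_mono (basicFamilies_mono ℵ₀ h)))

theorem mk_arhangelskiiStep_le [T2Space X] [FrechetUrysohnSpace X] (b : X → ℕ → Set X)
    {S : Set X} (hS : #S ≤ 𝔠) : #(arhangelskiiStep b S) ≤ 𝔠 :=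
  calc _ ≤ #(closure S) + #(pointsOutside (sUnion '' basicFamilies b ℵ₀ S)) := mk_union_le _ _
    _ ≤ 𝔠 ^ ℵ₀ + 𝔠 ^ ℵ₀ := by
      gcongr
      · exact (mk_closure_le_pow_aleph0 S).trans (power_le_power_right hS)
      · exact (mk_pointsOutside_le _).trans
          (mk_image_le.trans (mk_basicFamilies_le aleph0_le_continuum hS))
    _ = 𝔠 := by rw [continuum_power_aleph0, add_eq_self aleph0_le_continuum]

end Arhangelskii

theorem mk_le_continuum_of_lindelofSpace {X : Type u} [TopologicalSpace X] [T2Space X]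
    [FirstCountableTopology X] [LindelofSpace X] : #X ≤ 𝔠 := by
  rcases isEmpty_or_nonempty X with hX | hX
  · simp
  obtain ⟨b, hb⟩ := exists_isOpenNhdsBasis (X := X)
  obtain ⟨A, hAcard, hA⟩ := exists_mk_le_and_closed_under isRegular_aleph_one
    aleph_one_le_continuum (arhangelskiiStep_mono b) (fun _ hS => mk_arhangelskiiStep_le b hS)
  have hsmall : ∀ R : Set X, R.Countable → #R < ℵ₁ := fun R hR =>
    hR.le_aleph0.trans_lt aleph0_lt_aleph_one
  have hAclosed : IsClosed A := isClosed_of_closure_subset_of_countable fun R hRA hR =>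
    subset_union_left.trans (hA R hRA (hsmall R hR))
  suffices hAuniv : A = Set.univ by rwa [← mk_univ, ← hAuniv]
  refine eq_univ_of_forall fun q => by_contra fun hq => ?_
  choose! m hm using fun x (hx : x ∈ A) => hb.exists_notMem (ne_of_mem_of_not_mem hx hq)
  obtain ⟨r, hr, hcover⟩ := hAclosed.isLindelof.elim_countable_subcover
    (fun x : A => b x (m x)) (fun x => hb.isOpen _ _)
    (fun x hx => mem_iUnion.2 ⟨⟨x, hx⟩, hb.mem _ _⟩)
  set R : Set X := Subtype.val '' r
  have hRA : R ⊆ A := image_subset_iff.2 fun x _ => x.2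
  have hcover' : A ⊆ ⋃₀ ((fun x => b x (m x)) '' R) := by rwa [sUnion_image, biUnion_image]
  have hqR : q ∉ ⋃₀ ((fun x => b x (m x)) '' R) := by
    rw [sUnion_image, mem_iUnion₂]
    exact fun ⟨x, hxR, hqx⟩ => hm x (hRA hxR) hqx
  obtain ⟨y, hy, hyR⟩ := exists_mem_pointsOutside
    (mem_image_of_mem sUnion (image_mem_basicFamilies m (hr.image _).le_aleph0)) hqR
  exact hyR (hcover' (hA R hRA (hsmall R (hr.image _)) (subset_union_right hy)))

theorem Set.PairwiseDisjoint.mk_le_of_inter_nonempty {X : Type u} {𝒰 : Set (Set X)}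
    (h𝒰 : 𝒰.PairwiseDisjoint id) {L : Set X} (hL : ∀ U ∈ 𝒰, (U ∩ L).Nonempty) : #𝒰 ≤ #L := by
  choose f hf using hL
  refine mk_le_of_injective (f := fun U : 𝒰 => ⟨f U U.2, (hf U U.2).2⟩) fun U V hUV => ?_
  have hfUV : f U U.2 = f V V.2 := congrArg Subtype.val hUV
  exact Subtype.ext (h𝒰.elim U.2 V.2 (not_disjoint_iff.2 ⟨_, (hf U U.2).1, hfUV ▸ (hf V V.2).1⟩))

section Cellularity

variable {X : Type u} [TopologicalSpace X]

theorem CellularLindelof.mk_le_continuum_of_isCellularFamily [T2Space X] [FirstCountableTopology X]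
    (hCL : CellularLindelof X) {𝒰 : Set (Set X)} (h𝒰 : IsCellularFamily 𝒰) : #𝒰 ≤ 𝔠 := by
  obtain ⟨L, hL, hmeet⟩ := hCL 𝒰 h𝒰
  have : LindelofSpace L := isLindelof_iff_lindelofSpace.1 hL
  exact (h𝒰.2.mk_le_of_inter_nonempty hmeet).trans mk_le_continuum_of_lindelofSpace

theorem exists_maximal_cellular_refinement {ι : Type*} (V : ι → Set X) (I : Set ι) :
    ∃ 𝒟 : Set (Set X), IsCellularFamily 𝒟 ∧ (∀ D ∈ 𝒟, ∃ i ∈ I, D ⊆ V i) ∧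
      ∀ i ∈ I, ∀ W, IsOpen W → W.Nonempty → W ⊆ V i → ∃ D ∈ 𝒟, (W ∩ D).Nonempty := by
  set P := {𝒟 : Set (Set X) | IsCellularFamily 𝒟 ∧ ∀ D ∈ 𝒟, ∃ i ∈ I, D ⊆ V i}
  obtain ⟨𝒟, h𝒟⟩ := zorn_subset P fun c hcP hc =>
    ⟨⋃₀ c, ⟨⟨fun D ⟨_, h, hD⟩ => (hcP h).1.1 D hD,
      (hc.pairwiseDisjoint_sUnion id).2 fun _ h => (hcP h).1.2⟩,
      fun D ⟨_, h, hD⟩ => (hcP h).2 D hD⟩, fun _ => subset_sUnion_of_mem⟩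
  refine ⟨𝒟, h𝒟.prop.1, h𝒟.prop.2, fun i hi W hW hWne hWV => by_contra fun hmeet => ?_⟩
  push Not at hmeet
  have hdisj : ∀ D ∈ 𝒟, Disjoint W D := fun D hD =>
    disjoint_iff_inter_eq_empty.2 (hmeet D hD)
  have hW𝒟 : insert W 𝒟 ∈ P :=
    ⟨⟨forall_mem_insert.2 ⟨⟨hW, hWne⟩, h𝒟.prop.1.1⟩,
      h𝒟.prop.1.2.insert fun D hD _ => hdisj D hD⟩,
      forall_mem_insert.2 ⟨⟨i, hi, hWV⟩, h𝒟.prop.2⟩⟩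
  have hW : W ∈ 𝒟 := h𝒟.eq_of_subset hW𝒟 (subset_insert W 𝒟) ▸ mem_insert W 𝒟
  exact hWne.ne_empty (disjoint_self.1 (hdisj W hW))

theorem exists_subset_mk_le_and_biUnion_subset_closure {κ : Cardinal.{u}}
    (hc : ∀ 𝒰 : Set (Set X), IsCellularFamily 𝒰 → #𝒰 ≤ κ) {ι : Type u} (V : ι → Set X)
    (hV : ∀ i, IsOpen (V i)) (I : Set ι) :
    ∃ s ⊆ I, #s ≤ κ ∧ ⋃ i ∈ I, V i ⊆ closure (⋃ i ∈ s, V i) := by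
  obtain ⟨𝒟, h𝒟, hsub, hmax⟩ := exists_maximal_cellular_refinement V I
  choose idx hidxI hidx using fun D : 𝒟 => hsub D D.2
  refine ⟨range idx, range_subset_iff.2 hidxI, mk_range_le.trans (hc 𝒟 h𝒟), ?_⟩
  refine iUnion₂_subset fun i hi z hz => mem_closure_iff.2 fun N hN hzN => ?_
  obtain ⟨D, hD, w, ⟨hwN, -⟩, hwD⟩ :=
    hmax i hi (N ∩ V i) (hN.inter (hV i)) ⟨z, hzN, hz⟩ inter_subset_right
  exact ⟨w, hwN, mem_biUnion (mem_range_self ⟨D, hD⟩) (hidx ⟨D, hD⟩ hwD)⟩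

end Cellularity

theorem Cardinal.mk_iUnion_nat_le {X : Type u} {s : ℕ → Set X} {κ : Cardinal.{u}} (hκ : ℵ₀ ≤ κ)
    (hs : ∀ n, #(s n) ≤ κ) : #(⋃ n, s n) ≤ κ := by
  have := mk_iUnion_le_lift s
  simp only [mk_nat, lift_aleph0, lift_uzero] at this
  exact this.trans ((mul_le_mul' hκ (ciSup_le' hs)).trans (mul_eq_self hκ).le)

section HajnalJuhasz

variable {X : Type u} [TopologicalSpace X] [Nonempty X]

noncomputable def hajnalJuhaszStep (b : X → ℕ → Set X) (κ : Cardinal.{u}) (S : Set X) : Set X :=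
  pointsOutside ((fun 𝒞 : ℕ → Set (Set X) => ⋃ n, closure (⋃₀ 𝒞 n)) ''
    Set.univ.pi fun _ => basicFamilies b κ S)

theorem hajnalJuhaszStep_mono (b : X → ℕ → Set X) (κ : Cardinal.{u}) :
    Monotone (hajnalJuhaszStep b κ) := fun _ _ h =>
  pointsOutside_mono (image_mono (pi_mono fun _ _ => basicFamilies_mono κ h))

theorem mk_hajnalJuhaszStep_le (b : X → ℕ → Set X) {κ : Cardinal.{u}} (hκ : ℵ₀ ≤ κ) {S : Set X}
    (hS : #S ≤ 2 ^ κ) : #(hajnalJuhaszStep b κ S) ≤ 2 ^ κ := by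
  have hκ' : ℵ₀ ≤ 2 ^ κ := hκ.trans (cantor κ).le
  calc #(hajnalJuhaszStep b κ S)
      ≤ #(Set.univ.pi fun _ : ℕ => basicFamilies b κ S) := (mk_pointsOutside_le _).trans mk_image_le
    _ = #(basicFamilies b κ S) ^ ℵ₀ := by
      rw [mk_congr (Equiv.Set.univPi _)]
      simp
    _ ≤ ((2 ^ κ) ^ κ) ^ ℵ₀ := power_le_power_right (mk_basicFamilies_le hκ' hS)
    _ = 2 ^ κ := by rw [← power_mul, ← power_mul, mul_eq_left hκ hκ aleph0_ne_zero, mul_eq_self hκ]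

end HajnalJuhasz

theorem mk_le_two_power_of_cellularity_le {X : Type u} [TopologicalSpace X] [T2Space X]
    [FirstCountableTopology X] {κ : Cardinal.{u}} (hκ : ℵ₀ ≤ κ)
    (hc : ∀ 𝒰 : Set (Set X), IsCellularFamily 𝒰 → #𝒰 ≤ κ) : #X ≤ 2 ^ κ := by
  rcases isEmpty_or_nonempty X with hX | hX
  · simp
  obtain ⟨b, hb⟩ := exists_isOpenNhdsBasis (X := X)
  obtain ⟨A, hAcard, hA⟩ := exists_mk_le_and_closed_under (isRegular_succ hκ)
    (Order.succ_le_of_lt (cantor κ)) (hajnalJuhaszStep_mono b κ)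
    (fun S hS => mk_hajnalJuhaszStep_le b hκ hS)
  suffices hAuniv : A = Set.univ by rwa [← mk_univ, ← hAuniv]
  refine eq_univ_of_forall fun q => by_contra fun hq => ?_
  choose! n m hnm using fun x (hx : x ∈ A) => hb.exists_disjoint (ne_of_mem_of_not_mem hx hq)
  choose s hsA hsκ hsdense using fun k : ℕ => exists_subset_mk_le_and_biUnion_subset_closure hc
    (fun x => b x (m x)) (fun x => hb.isOpen _ _) {x ∈ A | n x = k}
  set R := ⋃ k, s k
  have hRA : R ⊆ A := iUnion_subset fun k => (hsA k).trans (sep_subset _ _)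
  set 𝒞 : ℕ → Set (Set X) := fun k => (fun x => b x (m x)) '' s k
  have h𝒞 : 𝒞 ∈ Set.univ.pi fun _ => basicFamilies b κ R := fun k _ =>
    basicFamilies_mono κ (subset_iUnion s k) (image_mem_basicFamilies m (hsκ k))
  have hq𝒞 : q ∉ ⋃ k, closure (⋃₀ 𝒞 k) := by
    rw [mem_iUnion]
    rintro ⟨k, hk⟩
    obtain ⟨z, hzq, hz⟩ := mem_closure_iff.1 hk (b q k) (hb.isOpen q k) (hb.mem q k)
    rw [sUnion_image, mem_iUnion₂] at hz
    obtain ⟨x, hxs, hzx⟩ := hz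
    obtain ⟨hxA, rfl⟩ := hsA k hxs
    exact (hnm x hxA).ne_of_mem hzx hzq rfl
  obtain ⟨y, hy, hy𝒞⟩ := exists_mem_pointsOutside
    (mem_image_of_mem (fun 𝒞 : ℕ → Set (Set X) => ⋃ n, closure (⋃₀ 𝒞 n)) h𝒞) hq𝒞
  have hyA : y ∈ A :=
    hA R hRA ((mk_iUnion_nat_le hκ hsκ).trans_lt (Order.lt_succ κ)) hy
  refine hy𝒞 (mem_iUnion.2 ⟨n y, ?_⟩)
  rw [sUnion_image]
  exact hsdense (n y) (mem_biUnion ⟨hyA, rfl⟩ (hb.mem y (m y)))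

/-- every Hausdorff cellular-Lindelöf first-countable space has
cardinality at most `2^𝔠`. -/
theorem stmt10 {X : Type u} [TopologicalSpace X] [T2Space X]
    [FirstCountableTopology X] (hCL : CellularLindelof X) :
    #X ≤ 2 ^ Cardinal.continuum :=
  mk_le_two_power_of_cellularity_le aleph0_le_continuum fun _ =>
    hCL.mk_le_continuum_of_isCellularFamily
end

section
/- Let X be a regular sequential space in which every free sequence is countable, and suppose some uncountable cardinal λ ≤ 𝔠⁺ is a caliber of X. Then |X| ≤ 𝔠. -/
open Cardinal Set Topology

universe u

/-!
Suppose `#X > 𝔠` and index by the initial well-order of type `λ`, whose initial segments have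
size at most `𝔠`. By transfinite recursion choose nonempty open sets `U i` whose closures miss the
closure of a set `G i` containing a point of every nonempty countable intersection of earlier
`U j`. Since `#(G i) ≤ 𝔠` and, in a sequential Hausdorff space, closures of sets of size `≤ 𝔠`
have size `≤ 𝔠`, regularity provides `U i`. The caliber yields `ℵ₁` of these sets with a common
point; choosing `q ν ∈ ⋂ ξ ≤ ν, U (s ξ)` gives a free sequence of length `ω₁`, because the `q μ`
with `μ < ν` lie in `G (s ν)` and those with `μ ≥ ν` lie in `U (s ν)`.
-/

open Ordinal

section SequentialClosure

variable {X : Type u} [TopologicalSpace X]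

theorem mk_seqClosure_le [T2Space X] (A : Set X) : #(seqClosure A) ≤ #A ^ ℵ₀ := by
  choose x hxA hx using fun y : seqClosure A => y.2
  have hinj : Function.Injective fun y n => (⟨x y n, hxA y n⟩ : A) := fun y z hyz => by
    have hxyz : x y = x z := funext fun n => congrArg Subtype.val (congrFun hyz n)
    exact Subtype.ext <| tendsto_nhds_unique (hx y) (hxyz ▸ hx z)
  simpa using mk_le_of_injective hinj

def seqClosureRec (A : Set X) (o : Ordinal.{u}) : Set X :=
  seqClosure (A ∪ ⋃ j < o, seqClosureRec A j)
termination_by o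

theorem subset_seqClosureRec (A : Set X) (o : Ordinal.{u}) : A ⊆ seqClosureRec A o := by
  rw [seqClosureRec]
  exact subset_union_left.trans subset_seqClosure

theorem isSeqClosed_iUnion_seqClosureRec (A : Set X) :
    IsSeqClosed (⋃ o < ω₁, seqClosureRec A o) := by
  intro x y hx hxy
  choose g hg hxg using fun n => mem_iUnion₂.mp (hx n)
  have hlt : ⨆ n, Order.succ (g n) < ω₁ :=
    iSup_lt_omega_one fun n => (isSuccLimit_omega 1).succ_lt (hg n)
  refine mem_iUnion₂.mpr ⟨_, hlt, ?_⟩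
  rw [seqClosureRec]
  refine ⟨x, fun n => Or.inr (mem_iUnion₂.mpr ⟨g n, ?_, hxg n⟩), hxy⟩
  exact (Order.lt_succ (g n)).trans_le (Ordinal.le_iSup (fun n => Order.succ (g n)) n)

theorem mk_seqClosureRec_le [T2Space X] {A : Set X} {κ : Cardinal.{u}} (hA : #A ≤ κ)
    (hκ : κ ^ ℵ₀ ≤ κ) (h₁ : ℵ₁ ≤ κ) {o : Ordinal.{u}} (ho : o < ω₁) :
    #(seqClosureRec A o) ≤ κ := by
  have h₀ : ℵ₀ ≤ κ := aleph0_le_aleph 1 |>.trans h₁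
  induction o using WellFoundedLT.induction with
  | _ o ih =>
    have hunion : #↥(A ∪ ⋃ j < o, seqClosureRec A j) ≤ κ := by
      refine (mk_union_le _ _).trans (add_le_of_le h₀ hA ?_)
      refine mk_biUnion_le_of_le ?_ h₀ _ fun j hj => ih j hj (hj.trans ho)
      exact (card_le_of_le_ord (by rw [ord_aleph]; exact ho.le)).trans h₁
    rw [seqClosureRec]
    exact (mk_seqClosure_le _).trans ((power_le_power_right hunion).trans hκ)

theorem mk_closure_le [T2Space X] [SequentialSpace X] {A : Set X} {κ : Cardinal.{u}}
    (hA : #A ≤ κ) (hκ : κ ^ ℵ₀ ≤ κ) (h₁ : ℵ₁ ≤ κ) : #(closure A) ≤ κ := by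
  have hsub : closure A ⊆ ⋃ o < ω₁, seqClosureRec A o :=
    closure_minimal (subset_seqClosureRec A 0 |>.trans <| subset_biUnion_of_mem (omega_pos 1))
      (isSeqClosed_iUnion_seqClosureRec A).isClosed
  refine (mk_le_mk_of_subset hsub).trans (mk_biUnion_le_of_le ?_ (aleph0_le_aleph 1 |>.trans h₁)
    _ fun o ho => mk_seqClosureRec_le hA hκ h₁ ho)
  simpa using h₁

end SequentialClosure

theorem WellFoundedLT.exists_forall_rec {ι α : Type*} [Preorder ι] [WellFoundedLT ι] [Nonempty α]
    {P : ι → (ι → α) → α → Prop}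
    (hP : ∀ i f g, EqOn f g (Iio i) → ∀ a, P i f a → P i g a)
    (h : ∀ i f, ∃ a, P i f a) : ∃ F : ι → α, ∀ i, P i F (F i) := by
  classical
  let restrict (i : ι) (f : ∀ j, j < i → α) (j : ι) : α :=
    if hj : j < i then f j hj else Classical.arbitrary α
  let F : ι → α := wellFounded_lt.fix fun i f => Classical.choose (h i (restrict i f))
  refine ⟨F, fun i => hP i (restrict i fun j _ => F j) F (fun j (hj : j < i) => dif_pos hj) _ ?_⟩
  rw [show F i = _ from wellFounded_lt.fix_eq _ i]
  exact Classical.choose_spec (h i _)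

theorem exists_isOpen_mem_disjoint_closure {X : Type*} [TopologicalSpace X] [RegularSpace X]
    {H : Set X} (hH : IsClosed H) {x : X} (hx : x ∉ H) :
    ∃ V, IsOpen V ∧ x ∈ V ∧ Disjoint (closure V) H := by
  obtain ⟨t, ht, htc, htH⟩ := exists_mem_nhds_isClosed_subset (hH.isOpen_compl.mem_nhds hx)
  exact ⟨interior t, isOpen_interior, mem_interior_iff_mem_nhds.mpr ht,
    subset_compl_iff_disjoint_right.mp <| (closure_minimal interior_subset htc).trans htH⟩

section CountableInterPoints

variable {X ι : Type u} [Nonempty X]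

/-- For an empty intersection `Classical.epsilon` contributes an arbitrary point. -/
def countableInterPoints (U : ι → Set X) (s : Set ι) : Set X :=
  (fun z => Classical.epsilon (· ∈ ⋂ j ∈ z, U j)) '' {z | z.Countable ∧ z ⊆ s}

theorem countableInterPoints_congr {U V : ι → Set X} {s : Set ι} (h : EqOn U V s) :
    countableInterPoints U s = countableInterPoints V s :=
  image_congr fun z hz => by
    have hUV : ⋂ j ∈ z, U j = ⋂ j ∈ z, V j := iInter₂_congr fun _ hj => h (hz.2 hj)
    rw [hUV]

theorem mk_countableInterPoints_le (U : ι → Set X) (s : Set ι) :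
    #(countableInterPoints U s) ≤ max #s ℵ₀ ^ ℵ₀ :=
  mk_image_le.trans <| (mk_subtype_mono fun _ hz => ⟨hz.2, hz.1.le_aleph0⟩).trans
    (mk_bounded_subset_le s ℵ₀)

end CountableInterPoints

theorem exists_isOpen_disjoint_closure_countableInterPoints {X ι : Type u} [TopologicalSpace X]
    [T1Space X] [RegularSpace X] [SequentialSpace X] [Nonempty X] [Preorder ι] [WellFoundedLT ι]
    (hX : 𝔠 < #X) (hι : ∀ i : ι, #(Iio i) ≤ 𝔠) :
    ∃ U : ι → Set X, ∀ i, IsOpen (U i) ∧ (U i).Nonempty ∧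
      Disjoint (closure (U i)) (closure (countableInterPoints U (Iio i))) := by
  have hsmall (i : ι) (U : ι → Set X) : #(closure (countableInterPoints U (Iio i))) < #X := by
    refine (mk_closure_le ?_ continuum_power_aleph0.le aleph_one_le_continuum).trans_lt hX
    calc _ ≤ max #(Iio i) ℵ₀ ^ ℵ₀ := mk_countableInterPoints_le U _
      _ ≤ 𝔠 ^ ℵ₀ := power_le_power_right (max_le (hι i) aleph0_le_continuum)
      _ = 𝔠 := continuum_power_aleph0
  refine WellFoundedLT.exists_forall_rec
    (P := fun i U V => IsOpen V ∧ V.Nonempty ∧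
      Disjoint (closure V) (closure (countableInterPoints U (Iio i))))
    (fun i U U' hUU' V hV => by rwa [← countableInterPoints_congr hUU']) fun i U => ?_
  obtain ⟨x, hx⟩ := compl_nonempty_of_mk_lt_mk (hsmall i U)
  obtain ⟨V, hV, hxV, hdisj⟩ := exists_isOpen_mem_disjoint_closure isClosed_closure hx
  exact ⟨V, hV, ⟨x, hxV⟩, hdisj⟩

theorem exists_isFreeSeq {X ι κ : Type u} [TopologicalSpace X] [Nonempty X] [Preorder ι]
    [LinearOrder κ] {U : ι → Set X}
    (hU : ∀ i, Disjoint (closure (U i)) (closure (countableInterPoints U (Iio i))))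
    {s : κ → ι} (hs : StrictMono s) (hκ : ∀ μ : κ, (Iio μ).Countable) {p : X}
    (hp : ∀ μ, p ∈ U (s μ)) : ∃ q : κ → X, IsFreeSeq q := by
  let q μ := Classical.epsilon (· ∈ ⋂ j ∈ s '' Iic μ, U j)
  have hq μ : q μ ∈ ⋂ j ∈ s '' Iic μ, U j :=
    Classical.epsilon_spec ⟨p, mem_iInter₂.mpr <| by rintro _ ⟨ν, -, rfl⟩; exact hp ν⟩
  refine ⟨q, fun ν => disjoint_iff_inter_eq_empty.mp ?_⟩
  have hinit : q '' Iio ν ⊆ countableInterPoints U (Iio (s ν)) := by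
    rintro _ ⟨μ, hμ, rfl⟩
    refine ⟨s '' Iic μ, ⟨?_, ?_⟩, rfl⟩
    · exact (Iio_insert (a := μ) ▸ (hκ μ).insert μ).image s
    · rintro _ ⟨ξ, hξ, rfl⟩
      exact hs ((mem_Iic.mp hξ).trans_lt hμ)
  have htail : q '' Ici ν ⊆ U (s ν) := by
    rintro _ ⟨μ, hμ, rfl⟩
    exact mem_iInter₂.mp (hq μ) (s ν) ⟨ν, hμ, rfl⟩
  exact ((hU (s ν)).mono (closure_mono htail) (closure_mono hinit)).symm

theorem exists_strictMono_ord_toType {ι : Type u} [LinearOrder ι] [WellFoundedLT ι]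
    {c : Cardinal.{u}} {S : Set ι} (h : c ≤ #S) :
    ∃ s : c.ord.ToType → ι, StrictMono s ∧ ∀ μ, s μ ∈ S := by
  have hle : typeLT c.ord.ToType ≤ typeLT S := by
    rw [type_toType, ord_le, card_type]
    exact h
  obtain ⟨f⟩ := type_le_iff'.mp hle
  exact ⟨fun μ => f μ, fun μ ν hμν => f.map_rel_iff.mpr hμν, fun μ => (f μ).2⟩

/-- a regular sequential space in which every free sequence is
countable and which has an uncountable caliber `λ ≤ 𝔠⁺` has cardinality at most `𝔠`. -/
theorem stmt16 {X : Type u} [TopologicalSpace X] [T1Space X] [RegularSpace X]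
    [SequentialSpace X]
    (hF : ∀ (ι : Type u) [LinearOrder ι] [WellFoundedLT ι] (f : ι → X),
      IsFreeSeq f → #ι ≤ ℵ₀)
    (lam : Cardinal.{u}) (h1 : ℵ₀ < lam) (h2 : lam ≤ Order.succ Cardinal.continuum)
    (hcal : IsCaliber X lam) :
    #X ≤ Cardinal.continuum := by
  by_contra! hX
  have : Nonempty X := mk_ne_zero_iff.mp (continuum_pos.trans hX).ne'
  obtain ⟨U, hU⟩ := exists_isOpen_disjoint_closure_countableInterPoints hX
    fun i : lam.ord.ToType =>
      Order.lt_succ_iff.mp <| (mk_Iio_lt i (by simp)).trans_le (by simpa using h2)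
  obtain ⟨S, hS, p, hp⟩ := hcal _ U (mk_ord_toType lam) fun i => ⟨(hU i).1, (hU i).2.1⟩
  obtain ⟨s, hs, hsS⟩ := exists_strictMono_ord_toType (c := ℵ₁) (S := S)
    (by rw [hS, ← succ_aleph0]; exact Order.succ_le_of_lt h1)
  have hcount (μ : (ℵ₁ : Cardinal.{u}).ord.ToType) : (Iio μ).Countable :=
    le_aleph0_iff_set_countable.mp <| lt_aleph_one_iff.mp <| by simpa using mk_Iio_lt μ (by simp)
  obtain ⟨q, hq⟩ := exists_isFreeSeq (fun i => (hU i).2.2) hs hcount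
    fun μ => mem_iInter₂.mp hp _ (hsS μ)
  simpa using hF _ q hq
end
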